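/- Let f : ℝ → ℝ be a continuous function for which there exist A, α > 0 with |f(x)| ≤ A(1+|x|)^α for all x ∈ ℝ. Then for every integer n ≥ 0 there exist C > 0 and T₀ > 0 such that ∫_{{x : |x − 2T^{3/2}| > T^{3/2}}} |f(x)| u_T(x) dx ≤ C T^{−n} for all T ≥ T₀. -/

import Mathlib

open MeasureTheory Set

noncomputable section

/-- `e2 z = e^{2πiz}`. -/
def e2 (z : ℂ) : ℂ := Complex.exp (2 * Real.pi * Complex.I * z)

/-- `φ₀` is a smooth even bump function supported in `[-1,1]` with `0 ≤ φ₀ ≤ 1`,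
`φ₀(0) = 1` and `∫ φ₀² = 1`. -/
def IsBumpBase (φ₀ : ℝ → ℝ) : Prop :=
  ContDiff ℝ (⊤ : ℕ∞) φ₀ ∧ (∀ x, φ₀ (-x) = φ₀ x) ∧ tsupport φ₀ ⊆ Set.Icc (-1) 1 ∧
  (∀ x, 0 ≤ φ₀ x ∧ φ₀ x ≤ 1) ∧ φ₀ 0 = 1 ∧ (∫ u : ℝ, (φ₀ u) ^ 2) = 1

/-- `ψ(x) = φ₀(log x)`. -/
def psiF (φ₀ : ℝ → ℝ) (x : ℝ) : ℝ := φ₀ (Real.log x)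

/-- `λ(x) = ∫₀^∞ ψ(y)ψ(x/y) dy/y`. -/
def lamF (φ₀ : ℝ → ℝ) (x : ℝ) : ℝ :=
  ∫ y in Set.Ioi (0 : ℝ), psiF φ₀ y * psiF φ₀ (x / y) / y

/-- `λ_T(x) = T x^{-2iT^{3/2}} λ(x^T)`. -/
def lamT (φ₀ : ℝ → ℝ) (T x : ℝ) : ℂ :=
  (T : ℂ) * (x : ℂ) ^ (-(2 * Complex.I * ((T ^ ((3 : ℝ) / 2) : ℝ) : ℂ))) * (lamF φ₀ (x ^ T) : ℂ)

/-- `u_T(t) = ∫₀^∞ λ_T(x) x^{it-1} dx`. -/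
def uT (φ₀ : ℝ → ℝ) (T t : ℝ) : ℂ :=
  ∫ x in Set.Ioi (0 : ℝ), lamT φ₀ T x * (x : ℂ) ^ (Complex.I * (t : ℂ) - 1)

/-!
`u_T` is the Mellin transform of `λ_T`, and the substitution `x = e^{-u}` turns it into a shifted,
rescaled Fourier transform: `u_T(t) = ĥ((t - 2T^{3/2}) / (2πT))` with
`h(u) = λ(e^{-u}) = (φ₀ ⋆ φ₀)(-u)` smooth and compactly supported. Hence
`|t - 2T^{3/2}|^k |u_T(t)| ≪_k T^k` for every `k`. On the tail `|t - 2T^{3/2}| > T^{3/2}`, a large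
`k` beats both the polynomial growth of `f` and any power of `T`, leaving the integrable majorant
`T^{-n} (1 + (t - 2T^{3/2})²)⁻¹`.
-/

open scoped ContDiff FourierTransform Real

section

variable {V E : Type*} [NormedAddCommGroup V] [InnerProductSpace ℝ V] [FiniteDimensional ℝ V]
  [MeasurableSpace V] [BorelSpace V] [NormedAddCommGroup E] [NormedSpace ℂ E]

theorem HasCompactSupport.exists_norm_pow_mul_norm_fourier_le {g : V → E}
    (hc : HasCompactSupport g) (hg : ContDiff ℝ ∞ g) (k : ℕ) :
    ∃ C, 0 ≤ C ∧ ∀ ξ : V, ‖ξ‖ ^ k * ‖𝓕 g ξ‖ ≤ C :=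
  ⟨_, apply_nonneg _ _, (𝓕 (hc.toSchwartzMap hg)).norm_pow_mul_le_seminorm ℝ k⟩

end

theorem integral_Ioi_zero_eq_integral_exp_smul {E : Type*} [NormedAddCommGroup E]
    [NormedSpace ℝ E] (g : ℝ → E) : ∫ y in Ioi 0, g y = ∫ v, Real.exp v • g (Real.exp v) := by
  rw [← Real.range_exp, ← image_univ, integral_image_eq_integral_abs_deriv_smul
    MeasurableSet.univ (fun x _ ↦ (Real.hasDerivAt_exp x).hasDerivWithinAt)
    Real.exp_injective.injOn]
  simp [abs_of_pos (Real.exp_pos _)]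

theorem mellin_I_mul_eq_fourier {E : Type*} [NormedAddCommGroup E] [NormedSpace ℂ E]
    (f : ℝ → E) (σ : ℝ) :
    mellin f (Complex.I * σ) = 𝓕 (fun u : ℝ ↦ f (Real.exp (-u))) (σ / (2 * π)) := by
  simp [mellin_eq_fourier]

open Convolution in
theorem lamF_eq_convolution (φ₀ : ℝ → ℝ) {x : ℝ} (hx : 0 < x) :
    lamF φ₀ x = (φ₀ ⋆[ContinuousLinearMap.mul ℝ ℝ] φ₀) (Real.log x) := by
  rw [lamF, integral_Ioi_zero_eq_integral_exp_smul, convolution_def]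
  congr 1 with v
  have hlog : Real.log (x / Real.exp v) = Real.log x - v := by
    rw [Real.log_div hx.ne' (Real.exp_ne_zero v), Real.log_exp]
  simp only [psiF, Real.log_exp, hlog, smul_eq_mul, ContinuousLinearMap.mul_apply']
  field_simp

theorem uT_eq_mellin (φ₀ : ℝ → ℝ) (T t : ℝ) :
    uT φ₀ T t = mellin (lamT φ₀ T) (Complex.I * t) := by
  simp only [uT, mellin, smul_eq_mul, mul_comm]

theorem mellin_lamT (φ₀ : ℝ → ℝ) {T : ℝ} (hT : 0 < T) (s : ℂ) :
    mellin (lamT φ₀ T) s =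
      mellin (fun x ↦ (lamF φ₀ x : ℂ)) ((s - 2 * Complex.I * (T ^ ((3 : ℝ) / 2) : ℝ)) / T) := by
  have hlamT : lamT φ₀ T = fun x : ℝ ↦ (T : ℂ) •
      ((x : ℂ) ^ (-(2 * Complex.I * ((T ^ ((3 : ℝ) / 2) : ℝ) : ℂ))) •
        (fun y ↦ (lamF φ₀ y : ℂ)) (x ^ T)) := by
    ext x
    simp [lamT, mul_assoc]
  rw [hlamT, mellin_const_smul, mellin_cpow_smul, mellin_comp_rpow (fun y ↦ (lamF φ₀ y : ℂ)),
    abs_of_pos hT, ← sub_eq_add_neg, Complex.real_smul, smul_eq_mul, ← mul_assoc,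
    ← Complex.ofReal_mul, mul_inv_cancel₀ hT.ne', Complex.ofReal_one, one_mul]

theorem uT_eq_fourier (φ₀ : ℝ → ℝ) {T : ℝ} (hT : 0 < T) (t : ℝ) :
    uT φ₀ T t = 𝓕 (fun u : ℝ ↦ (lamF φ₀ (Real.exp (-u)) : ℂ))
      ((t - 2 * T ^ ((3 : ℝ) / 2)) / T / (2 * π)) := by
  rw [uT_eq_mellin, mellin_lamT φ₀ hT, ← mellin_I_mul_eq_fourier (fun x ↦ (lamF φ₀ x : ℂ))]
  congr 1
  push_cast
  ring

open Convolution in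
theorem lamF_exp_neg (φ₀ : ℝ → ℝ) (u : ℝ) :
    lamF φ₀ (Real.exp (-u)) = (φ₀ ⋆[ContinuousLinearMap.mul ℝ ℝ] φ₀) (-u) := by
  rw [lamF_eq_convolution φ₀ (Real.exp_pos _), Real.log_exp]

namespace IsBumpBase

variable {φ₀ : ℝ → ℝ} (hφ₀ : IsBumpBase φ₀)
include hφ₀

theorem hasCompactSupport : HasCompactSupport φ₀ :=
  .of_support_subset_isCompact isCompact_Icc ((subset_tsupport φ₀).trans hφ₀.2.2.1)

theorem contDiff_lamF_exp_neg : ContDiff ℝ ∞ fun u : ℝ ↦ (lamF φ₀ (Real.exp (-u)) : ℂ) := by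
  simp_rw [lamF_exp_neg]
  have hconv := hφ₀.hasCompactSupport.contDiff_convolution_right
    (L := ContinuousLinearMap.mul ℝ ℝ) (hφ₀.1.continuous.locallyIntegrable (μ := volume)) hφ₀.1
  exact Complex.ofRealCLM.contDiff.comp (hconv.comp contDiff_neg)

theorem hasCompactSupport_lamF_exp_neg :
    HasCompactSupport fun u : ℝ ↦ (lamF φ₀ (Real.exp (-u)) : ℂ) := by
  simp_rw [lamF_exp_neg]
  exact ((hφ₀.hasCompactSupport.convolution _ hφ₀.hasCompactSupport).comp_homeomorph
    (Homeomorph.neg ℝ)).comp_left Complex.ofReal_zero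

theorem exists_uT_decay (k : ℕ) : ∃ K, 0 ≤ K ∧ ∀ T, 0 < T → ∀ t,
    |t - 2 * T ^ ((3 : ℝ) / 2)| ^ k * ‖uT φ₀ T t‖ ≤ K * T ^ k := by
  obtain ⟨C, hC0, hC⟩ := hφ₀.hasCompactSupport_lamF_exp_neg.exists_norm_pow_mul_norm_fourier_le
    hφ₀.contDiff_lamF_exp_neg k
  refine ⟨(2 * π) ^ k * C, by positivity, fun T hT t ↦ ?_⟩
  set ξ := (t - 2 * T ^ ((3 : ℝ) / 2)) / T / (2 * π)
  have hξ : |t - 2 * T ^ ((3 : ℝ) / 2)| = 2 * π * T * ‖ξ‖ := by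
    rw [Real.norm_eq_abs, abs_div, abs_div, abs_of_pos hT, abs_of_pos Real.two_pi_pos]
    field_simp
  calc |t - 2 * T ^ ((3 : ℝ) / 2)| ^ k * ‖uT φ₀ T t‖
      = (2 * π * T) ^ k *
          (‖ξ‖ ^ k * ‖𝓕 (fun u : ℝ ↦ (lamF φ₀ (Real.exp (-u)) : ℂ)) ξ‖) := by
        rw [uT_eq_fourier φ₀ hT, hξ, mul_pow, mul_assoc]
    _ ≤ (2 * π * T) ^ k * C := by gcongr; exact hC ξ
    _ = (2 * π) ^ k * C * T ^ k := by ring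

end IsBumpBase

/-- The exponent `k = 2n + 3m + 6` is chosen so that `k + n = 3(n + m + 2)`: the decay `(T/s)^k`
absorbs `T^n` and the growth `s^m` of `f`, and still leaves `s^{-2}`. -/
theorem pow_mul_pow_le_of_rpow_three_halves_le {T s : ℝ} (hT : 0 ≤ T)
    (hs : T ^ ((3 : ℝ) / 2) ≤ s) (m n : ℕ) :
    T ^ (3 * (n + m + 2)) * s ^ (m + 2) ≤ s ^ (2 * n + 3 * m + 6) := by
  have hs0 : 0 ≤ s := (by positivity : 0 ≤ T ^ ((3 : ℝ) / 2)).trans hs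
  have hT3 : T ^ 3 ≤ s ^ 2 :=
    calc T ^ 3 = (T ^ ((3 : ℝ) / 2)) ^ 2 := by rw [← Real.rpow_mul_natCast hT]; norm_num
      _ ≤ s ^ 2 := by gcongr
  calc T ^ (3 * (n + m + 2)) * s ^ (m + 2) = (T ^ 3) ^ (n + m + 2) * s ^ (m + 2) := by
        rw [pow_mul]
    _ ≤ (s ^ 2) ^ (n + m + 2) * s ^ (m + 2) := by gcongr
    _ = s ^ (2 * n + 3 * m + 6) := by ring

theorem abs_le_mul_one_add_abs_pow_ceil {f : ℝ → ℝ} {A α : ℝ} (hA : 0 ≤ A)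
    (hbd : ∀ x, |f x| ≤ A * (1 + |x|) ^ α) (x : ℝ) : |f x| ≤ A * (1 + |x|) ^ ⌈α⌉₊ := by
  rw [← Real.rpow_natCast]
  exact (hbd x).trans <| by
    gcongr
    · linarith [abs_nonneg x]
    · exact Nat.le_ceil α

theorem abs_mul_le_of_three_halves_tail {T x a b A K : ℝ} {m n : ℕ} (hT : 1 ≤ T) (hA : 0 ≤ A)
    (hK : 0 ≤ K) (hx : T ^ ((3 : ℝ) / 2) < |x - 2 * T ^ ((3 : ℝ) / 2)|)
    (ha : |a| ≤ A * (1 + |x|) ^ m)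
    (hb : |x - 2 * T ^ ((3 : ℝ) / 2)| ^ (2 * n + 3 * m + 6) * |b| ≤
      K * T ^ (2 * n + 3 * m + 6)) :
    |a * b| ≤ 2 * 4 ^ m * A * K / T ^ n * (1 + (x - 2 * T ^ ((3 : ℝ) / 2)) ^ 2)⁻¹ := by
  set R := T ^ ((3 : ℝ) / 2)
  set s := |x - 2 * R|
  set k := 2 * n + 3 * m + 6
  have hT0 : 0 < T := one_pos.trans_le hT
  have hR : 1 ≤ R := Real.one_le_rpow hT (by norm_num)
  have hs : 0 < s := by linarith
  have hx4 : 1 + |x| ≤ 4 * s := by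
    have : |2 * R| = 2 * R := abs_of_pos (by positivity)
    linarith [abs_sub_abs_le_abs_sub x (2 * R)]
  have hsq : 1 + (x - 2 * R) ^ 2 ≤ 2 * s ^ 2 := by
    rw [← sq_abs]; nlinarith
  have key : s ^ k * (|a| * |b| * (T ^ n * (1 + (x - 2 * R) ^ 2))) ≤
      s ^ k * (2 * 4 ^ m * A * K) :=
    calc s ^ k * (|a| * |b| * (T ^ n * (1 + (x - 2 * R) ^ 2)))
        = |a| * (1 + (x - 2 * R) ^ 2) * T ^ n * (s ^ k * |b|) := by ring
      _ ≤ A * (4 * s) ^ m * (2 * s ^ 2) * T ^ n * (K * T ^ k) := by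
        gcongr
        exact ha.trans (by gcongr)
      _ = 2 * 4 ^ m * A * K * (T ^ (3 * (n + m + 2)) * s ^ (m + 2)) := by ring
      _ ≤ 2 * 4 ^ m * A * K * s ^ k := mul_le_mul_of_nonneg_left
        (pow_mul_pow_le_of_rpow_three_halves_le hT0.le hx.le m n) (by positivity)
      _ = s ^ k * (2 * 4 ^ m * A * K) := by ring
  rw [abs_mul, ← div_eq_mul_inv, div_div, le_div_iff₀ (by positivity)]
  exact le_of_mul_le_mul_left key (pow_pos hs k)

theorem setIntegral_le_integral_of_abs_le {α : Type*} [MeasurableSpace α] {μ : Measure α}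
    {f g : α → ℝ} {s : Set α} (hs : MeasurableSet s) (hg : Integrable g μ) (hg0 : 0 ≤ g)
    (h : ∀ x ∈ s, |f x| ≤ g x) : ∫ x in s, f x ∂μ ≤ ∫ x, g x ∂μ :=
  calc ∫ x in s, f x ∂μ ≤ ‖∫ x in s, f x ∂μ‖ := Real.le_norm_self _
    _ ≤ ∫ x in s, g x ∂μ :=
      norm_integral_le_of_norm_le hg.integrableOn (ae_restrict_of_forall_mem hs h)
    _ ≤ ∫ x, g x ∂μ := setIntegral_le_integral hg (.of_forall hg0)

theorem uT_tail_integral_rapid_decay_general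
    (φ₀ : ℝ → ℝ) (hφ₀ : IsBumpBase φ₀)
    (f : ℝ → ℝ) (A α : ℝ)
    (hbd : ∀ x : ℝ, |f x| ≤ A * (1 + |x|) ^ α) :
    ∀ n : ℕ, ∃ C : ℝ, 0 < C ∧ ∃ T₀ : ℝ, 0 < T₀ ∧ ∀ T : ℝ, T₀ ≤ T →
      (∫ x in {x : ℝ | T ^ ((3 : ℝ) / 2) < |x - 2 * T ^ ((3 : ℝ) / 2)|},
        |f x| * (uT φ₀ T x).re) ≤ C / T ^ n := by
  intro n
  set m := ⌈α⌉₊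
  have hA : 0 ≤ A := by simpa using (abs_nonneg _).trans (hbd 0)
  obtain ⟨K, hK0, hK⟩ := hφ₀.exists_uT_decay (2 * n + 3 * m + 6)
  refine ⟨2 * 4 ^ m * A * K * π + 1, by positivity, 1, one_pos, fun T hT ↦ ?_⟩
  set c := 2 * T ^ ((3 : ℝ) / 2)
  have hT0 : 0 < T := one_pos.trans_le hT
  have hmaj : Integrable fun x ↦ 2 * 4 ^ m * A * K / T ^ n * (1 + (x - c) ^ 2)⁻¹ :=
    (integrable_inv_one_add_sq.comp_sub_right c).const_mul _
  calc _ ≤ ∫ x, 2 * 4 ^ m * A * K / T ^ n * (1 + (x - c) ^ 2)⁻¹ := by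
        refine setIntegral_le_integral_of_abs_le
          (isOpen_lt continuous_const (by fun_prop)).measurableSet hmaj
          (fun x ↦ by positivity) fun x hx ↦ ?_
        refine abs_mul_le_of_three_halves_tail hT hA hK0 hx
          ((abs_abs _).trans_le (abs_le_mul_one_add_abs_pow_ceil hA hbd x)) ?_
        exact (mul_le_mul_of_nonneg_left (Complex.abs_re_le_norm _) (by positivity)).trans
          (hK T hT0 x)
    _ = 2 * 4 ^ m * A * K * π / T ^ n := by
        rw [integral_const_mul, integral_sub_right_eq_self (fun x ↦ (1 + x ^ 2)⁻¹),
          integral_univ_inv_one_add_sq]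
        ring
    _ ≤ _ := by gcongr; linarith

/-- For `f` continuous of polynomial growth, the integral of
`|f| u_T` over `{x : |x - 2T^{3/2}| > T^{3/2}}` decays rapidly as `T → ∞`. -/
theorem uT_tail_integral_rapid_decay
    (φ₀ : ℝ → ℝ) (hφ₀ : IsBumpBase φ₀)
    (f : ℝ → ℝ) (hf : Continuous f) (A α : ℝ) (hA : 0 < A) (hα : 0 < α)
    (hbd : ∀ x : ℝ, |f x| ≤ A * (1 + |x|) ^ α) :
    ∀ n : ℕ, ∃ C : ℝ, 0 < C ∧ ∃ T₀ : ℝ, 0 < T₀ ∧ ∀ T : ℝ, T₀ ≤ T →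
      (∫ x in {x : ℝ | T ^ ((3 : ℝ) / 2) < |x - 2 * T ^ ((3 : ℝ) / 2)|},
        |f x| * (uT φ₀ T x).re) ≤ C / T ^ n :=
  uT_tail_integral_rapid_decay_general φ₀ hφ₀ f A α hbd
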